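/- Every non-unital extreme point M of the convex set of qubit channels has a Choi matrix C_{M†∘M} that is positive definite (full rank). -/

import Mathlib

open Matrix Kronecker BigOperators
open scoped ComplexOrder

noncomputable section

abbrev Mat (d : ℕ) := Matrix (Fin d) (Fin d) ℂ

section Defs

variable {α β α₁ β₁ α₂ β₂ γ δ : Type*}
variable [Fintype α] [DecidableEq α] [Fintype β] [DecidableEq β]
variable [Fintype α₁] [DecidableEq α₁] [Fintype β₁] [DecidableEq β₁]
variable [Fintype α₂] [DecidableEq α₂] [Fintype β₂] [DecidableEq β₂]
variable [Fintype γ] [DecidableEq γ] [Fintype δ] [DecidableEq δ]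

/-- The Choi matrix of a map on matrices. -/
def choiMatrix (S : Matrix α α ℂ → Matrix β β ℂ) : Matrix (β × α) (β × α) ℂ :=
  ∑ i : α, ∑ j : α, (S (single i j 1)) ⊗ₖ (single i j 1)

/-- Completely positive (via Choi's theorem). -/
def IsCPMap (S : Matrix α α ℂ → Matrix β β ℂ) : Prop := (choiMatrix S).PosSemidef

/-- Trace preserving. -/
def IsTPMap (S : Matrix α α ℂ → Matrix β β ℂ) : Prop := ∀ X, (S X).trace = X.trace

/-- A quantum channel: completely positive and trace preserving. -/
def IsQChannel (S : Matrix α α ℂ → Matrix β β ℂ) : Prop := IsCPMap S ∧ IsTPMap S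

/-- A density operator. -/
def IsDensity (ρ : Matrix α α ℂ) : Prop := ρ.PosSemidef ∧ ρ.trace = 1

/-- The square root of a positive semidefinite matrix, as `Matrix.PosSemidef.sqrt` was defined
in Mathlib (Dec 2024); removed from current Mathlib. -/
def Matrix.PosSemidef.sqrt {A : Matrix α α ℂ} (hA : A.PosSemidef) : Matrix α α ℂ :=
  hA.1.eigenvectorUnitary.1 * diagonal ((↑) ∘ (√·) ∘ hA.1.eigenvalues) *
    (star hA.1.eigenvectorUnitary : Matrix α α ℂ)

/-- Trace norm of a matrix: trace of √(AᴴA). -/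
def traceNorm (A : Matrix α α ℂ) : ℝ :=
  ((Matrix.posSemidef_conjTranspose_mul_self A).sqrt.trace).re

/-- Hilbert–Schmidt adjoint of a map on matrices. -/
def hsAdjoint (S : Matrix α α ℂ → Matrix β β ℂ) (X : Matrix β β ℂ) : Matrix α α ℂ :=
  ∑ i : α, ∑ j : α, ((S (single i j 1))ᴴ * X).trace • single i j 1

/-- Generalized (Moore–Penrose) inverse of `σ^{1/2}`, for Hermitian `σ`,
via spectral decomposition (and junk value `0` otherwise). -/
def pinvSqrt (σ : Matrix α α ℂ) : Matrix α α ℂ :=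
  if hσ : σ.IsHermitian then
    (hσ.eigenvectorUnitary : Matrix α α ℂ) *
      Matrix.diagonal (fun i => (((Real.sqrt (hσ.eigenvalues i))⁻¹ : ℝ) : ℂ)) *
      (star (hσ.eigenvectorUnitary : Matrix α α ℂ))
  else 0

/-- Quantum χ²-divergence `Tr((ρ-σ) σ^{-1/2} (ρ-σ) σ^{-1/2})`. -/
def chiSq (ρ σ : Matrix α α ℂ) : ℝ :=
  (((ρ - σ) * pinvSqrt σ * (ρ - σ) * pinvSqrt σ).trace).re

/-- Support inclusion `supp ρ ⊆ supp σ` (i.e. `ker σ ⊆ ker ρ`). -/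
def SuppIncl (ρ σ : Matrix α α ℂ) : Prop :=
  ∀ v : α → ℂ, σ *ᵥ v = 0 → ρ *ᵥ v = 0

/-- Separable bipartite states. -/
def IsSepState (σ : Matrix (α × β) (α × β) ℂ) : Prop :=
  ∃ (m : ℕ) (p : Fin m → ℝ) (ρA : Fin m → Matrix α α ℂ) (ρB : Fin m → Matrix β β ℂ),
    (∀ i, 0 ≤ p i) ∧ (∑ i, p i = 1) ∧ (∀ i, IsDensity (ρA i)) ∧ (∀ i, IsDensity (ρB i)) ∧
    σ = ∑ i, (p i : ℂ) • (ρA i ⊗ₖ ρB i)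

/-- χ²-divergence to the set of separable states across the cut `α : β`. -/
def chiSqSep (τ : Matrix (α × β) (α × β) ℂ) : ℝ :=
  sInf {r | ∃ σ, IsDensity σ ∧ IsSepState σ ∧ SuppIncl τ σ ∧ r = chiSq τ σ}

/-- Trace-norm contraction coefficient. -/
def etaTr (T : Matrix α α ℂ → Matrix β β ℂ) : ℝ :=
  sSup {r | ∃ ρ σ, IsDensity ρ ∧ IsDensity σ ∧ ρ ≠ σ ∧
    r = traceNorm (T ρ - T σ) / traceNorm (ρ - σ)}

/-- χ² contraction coefficient. -/
def etaChi (T : Matrix α α ℂ → Matrix β β ℂ) : ℝ :=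
  sSup {r | ∃ ρ σ, IsDensity ρ ∧ IsDensity σ ∧ SuppIncl ρ σ ∧ ρ ≠ σ ∧
    r = chiSq (T ρ) (T σ) / chiSq ρ σ}

/-- Minimal eigenvalue of a (Hermitian) matrix. -/
def lamMin (M : Matrix α α ℂ) : ℝ :=
  if h : M.IsHermitian then ⨅ i, h.eigenvalues i else 0

/-- The rank-one projector `|ψ⟩⟨ψ|`. -/
def projVec (ψ : α → ℂ) : Matrix α α ℂ := vecMulVec ψ (star ψ)

/-- Unit vector (pure state). -/
def IsUnitVec (ψ : α → ℂ) : Prop := star ψ ⬝ᵥ ψ = 1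

/-- Partial trace over the second tensor factor. -/
def ptraceSnd (M : Matrix (α × β) (α × β) ℂ) : Matrix α α ℂ :=
  fun i j => ∑ e : β, M (i, e) (j, e)

-- Square root of a positive semidefinite matrix (junk value `0` otherwise).
open Classical in
def matSqrt (ρ : Matrix α α ℂ) : Matrix α α ℂ :=
  if h : ρ.PosSemidef then h.sqrt else 0

/-- Fidelity `F(ρ,σ) = ‖√ρ √σ‖₁²`. -/
def fidelity (ρ σ : Matrix α α ℂ) : ℝ := (traceNorm (matSqrt ρ * matSqrt σ))^2

/-- Tensor (Kronecker) product of two maps on matrices. -/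
def mapKron (S₁ : Matrix α α ℂ → Matrix α α ℂ) (S₂ : Matrix β β ℂ → Matrix β β ℂ)
    (M : Matrix (α × β) (α × β) ℂ) : Matrix (α × β) (α × β) ℂ :=
  fun r c => ∑ i, ∑ j, ∑ k, ∑ l,
    S₁ (single i j 1) r.1 c.1 * S₂ (single k l 1) r.2 c.2 * M (i, k) (j, l)

/-- Induced trace norm of a map on matrices. -/
def indTraceNorm (L : Matrix α α ℂ → Matrix β β ℂ) : ℝ :=
  sSup {r | ∃ X, traceNorm X ≤ 1 ∧ r = traceNorm (L X)}

/-- Entanglement-breaking map: Kraus representation with rank-one Kraus operators. -/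
def IsEntanglementBreaking (S : Matrix α α ℂ → Matrix β β ℂ) : Prop :=
  ∃ (m : ℕ) (K : Fin m → Matrix β α ℂ),
    (∀ i, (K i).rank ≤ 1) ∧ (∑ i, (K i)ᴴ * K i = 1) ∧ ∀ X, S X = ∑ i, K i * X * (K i)ᴴ

/-- Unitary channel `X ↦ U X Uᴴ`. -/
def IsUnitaryChannel (S : Matrix α α ℂ → Matrix α α ℂ) : Prop :=
  ∃ U : Matrix α α ℂ, U ∈ Matrix.unitaryGroup α ℂ ∧ ∀ X, S X = U * X * Uᴴ

/-- Separable bipartite channel: Kraus operators of tensor product form. -/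
def IsSepChannel (T : Matrix (α₁ × β₁) (α₁ × β₁) ℂ → Matrix (α₂ × β₂) (α₂ × β₂) ℂ) : Prop :=
  ∃ (m : ℕ) (KA : Fin m → Matrix α₂ α₁ ℂ) (KB : Fin m → Matrix β₂ β₁ ℂ),
    (∑ i, (KA i ⊗ₖ KB i)ᴴ * (KA i ⊗ₖ KB i) = 1) ∧
    ∀ X, T X = ∑ i, (KA i ⊗ₖ KB i) * X * (KA i ⊗ₖ KB i)ᴴ

/-- `Id_{γ} ⊗ T ⊗ Id_{δ}` in the arrangement `(γ × α) × (β × δ)`. -/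
def idTensorMap (T : Matrix (α₁ × β₁) (α₁ × β₁) ℂ → Matrix (α₂ × β₂) (α₂ × β₂) ℂ)
    (M : Matrix ((γ × α₁) × (β₁ × δ)) ((γ × α₁) × (β₁ × δ)) ℂ) :
    Matrix ((γ × α₂) × (β₂ × δ)) ((γ × α₂) × (β₂ × δ)) ℂ :=
  fun r c => ∑ a₁ : α₁, ∑ b₁ : β₁, ∑ a₁' : α₁, ∑ b₁' : β₁,
    T (single (a₁, b₁) (a₁', b₁') 1) (r.1.2, r.2.1) (c.1.2, c.2.1) *
      M ((r.1.1, a₁), (b₁, r.2.2)) ((c.1.1, a₁'), (b₁', c.2.2))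

end Defs

/-- `n`-fold tensor power of a map on `d×d` matrices. -/
def tpow {d : ℕ} (S : Mat d → Mat d) (n : ℕ)
    (X : Matrix (Fin n → Fin d) (Fin n → Fin d) ℂ) :
    Matrix (Fin n → Fin d) (Fin n → Fin d) ℂ :=
  fun f g => ∑ f', ∑ g', X f' g' * ∏ k, S (single (f' k) (g' k) 1) (f k) (g k)

/-- `n`-fold Kronecker tensor power of a matrix. -/
def matTpow {d : ℕ} (A : Mat d) (n : ℕ) : Matrix (Fin n → Fin d) (Fin n → Fin d) ℂ :=
  fun f g => ∏ k, A (f k) (g k)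

/-- A cc-qq state `Σ_{x,y} p_{xy} |x⟩⟨x|_X ⊗ |y⟩⟨y|_Y ⊗ ρ^{xy}_{AB}`,
arranged across the cut `(X,A) : (B,Y)`. -/
def ccqqState {dX dY dA dB : ℕ} (p : Fin dX → Fin dY → ℝ)
    (ρ : Fin dX → Fin dY → Matrix (Fin dA × Fin dB) (Fin dA × Fin dB) ℂ) :
    Matrix ((Fin dX × Fin dA) × (Fin dB × Fin dY)) ((Fin dX × Fin dA) × (Fin dB × Fin dY)) ℂ :=
  fun r c => if r.1.1 = c.1.1 ∧ r.2.2 = c.2.2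
    then (p r.1.1 r.2.2 : ℂ) * ρ r.1.1 r.2.2 (r.1.2, r.2.1) (c.1.2, c.2.1) else 0


/-! Write `M X = ∑ₐ Kₐ X Kₐᴴ` with linearly independent Kraus operators, read off from the
spectral decomposition of the Choi matrix. Choi's perturbation argument: if `T` is Hermitian and
`∑ T_ab K_bᴴ K_a = 0`, then `X ↦ ∑ (1 ± εT)_ab K_a X K_bᴴ` are two channels with midpoint `M`, so
extremality forces `T = 0`; hence the `n²` products `K_bᴴ K_a` are linearly independent in the
four-dimensional space `Mat 2`, and `n ≤ 2`. A single Kraus operator would be unitary, making `M`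
unital, so `n = 2` and the four products span `Mat 2`. They are the Kraus operators of `M† ∘ M`,
and a map whose Kraus operators span the matrix space has a positive definite Choi matrix. -/

open Filter Topology

theorem Matrix.mul_right_injective_of_mulVec_injective {m n p : Type*} [Fintype n]
    {V : Matrix m n ℂ} (hV : Function.Injective V.mulVec) :
    Function.Injective fun A : Matrix n p ℂ => V * A := by
  intro A B h
  ext i j
  have hcol : ∀ C : Matrix n p ℂ, V *ᵥ (fun k => C k j) = fun i => (V * C) i j := fun C => rfl
  have hAB : V *ᵥ (fun k => A k j) = V *ᵥ (fun k => B k j) := by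
    rw [hcol, hcol]
    exact congrArg (fun C i => C i j) h
  exact congrFun (hV hAB) i

theorem Matrix.IsHermitian.posSemidef_one_add_smul {n : Type*} [Fintype n] [DecidableEq n]
    {T : Matrix n n ℂ} (hT : T.IsHermitian) {s : ℝ} (hs : ∀ i, 0 ≤ 1 + s * hT.eigenvalues i) :
    (1 + (s : ℂ) • T).PosSemidef := by
  have hdiag : 1 + (s : ℂ) • T = Unitary.conjStarAlgAut ℂ _ hT.eigenvectorUnitary
      (diagonal fun i => ((1 + s * hT.eigenvalues i : ℝ) : ℂ)) := by
    conv_lhs => rw [hT.spectral_theorem]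
    rw [← map_one (Unitary.conjStarAlgAut ℂ _ hT.eigenvectorUnitary), ← map_smul, ← map_add]
    congr 1
    ext i j
    by_cases h : i = j <;> simp [h]
  rw [hdiag, Unitary.conjStarAlgAut_apply, star_eq_conjTranspose]
  exact (PosSemidef.diagonal fun i => Complex.zero_le_real.2 (hs i)).mul_mul_conjTranspose_same _

theorem Matrix.IsHermitian.eventually_posSemidef_one_add_smul {n : Type*} [Fintype n]
    [DecidableEq n] {T : Matrix n n ℂ} (hT : T.IsHermitian) :
    ∀ᶠ s : ℝ in 𝓝 0, (1 + (s : ℂ) • T).PosSemidef := by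
  have h : ∀ i, ∀ᶠ s : ℝ in 𝓝 0, 0 < 1 + s * hT.eigenvalues i := fun i =>
    ((by fun_prop : Continuous fun s : ℝ => 1 + s * hT.eigenvalues i).tendsto' 0 1
      (by simp)).eventually (lt_mem_nhds one_pos)
  filter_upwards [eventually_all.2 h] with s hs using hT.posSemidef_one_add_smul fun i => (hs i).le

theorem Matrix.PosSemidef.exists_linearIndependent_col_eq_mul_conjTranspose {m : Type*}
    [Fintype m] [DecidableEq m] {C : Matrix m m ℂ} (hC : C.PosSemidef) :
    ∃ (n : ℕ) (V : Matrix m (Fin n) ℂ), LinearIndependent ℂ V.col ∧ C = V * Vᴴ := by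
  classical
  set U : Matrix m m ℂ := (hC.1.eigenvectorUnitary : Matrix m m ℂ)
  set ev := hC.1.eigenvalues
  let e := Fintype.equivFin {a // ev a ≠ 0}
  let W : Matrix m {a // ev a ≠ 0} ℂ := of fun p a => U p a * (√(ev a) : ℝ)
  refine ⟨_, W.submatrix id e.symm, ?_, ?_⟩
  · have hU : LinearIndependent ℂ U.col := linearIndependent_cols_of_isUnit Unitary.isUnit_coe
    have hW : LinearIndependent ℂ W.col := by
      convert (hU.comp Subtype.val Subtype.val_injective).units_smul
        fun a : {a // ev a ≠ 0} => Units.mk0 ((√(ev a) : ℝ) : ℂ)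
          (Complex.ofReal_ne_zero.2 (Real.sqrt_pos.2 ((hC.eigenvalues_nonneg a).lt_of_ne' a.2)).ne')
      ext a p
      simp [W, Units.smul_def, mul_comm]
    exact hW.comp e.symm e.symm.injective
  · rw [conjTranspose_submatrix, submatrix_mul_equiv, submatrix_id_id]
    ext p q
    have hspec : C p q = ∑ a, U p a * ev a * star (U q a) := by
      conv_lhs => rw [hC.1.spectral_theorem]
      rw [Unitary.conjStarAlgAut_apply, mul_apply]
      simp [mul_diagonal, U, ev]
    calc C p q = ∑ a, U p a * ev a * star (U q a) := hspec
      _ = ∑ a ∈ Finset.univ with ev a ≠ 0, U p a * ev a * star (U q a) :=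
        (Finset.sum_filter_of_ne fun a _ h => by contrapose! h; simp [h]).symm
      _ = ∑ a : {a // ev a ≠ 0}, U p a * ev a * star (U q a) := Finset.sum_subtype _ (by simp) _
      _ = (W * Wᴴ) p q := by
        simp only [W, mul_apply, conjTranspose_apply, of_apply, star_mul', Complex.star_def,
          Complex.conj_ofReal]
        refine Finset.sum_congr rfl fun a _ => ?_
        rw [mul_mul_mul_comm, ← Complex.ofReal_mul, Real.mul_self_sqrt (hC.eigenvalues_nonneg a),
          mul_right_comm]

section Kraus

variable {α β ι : Type*}

theorem choiMatrix_apply [Fintype α] [DecidableEq α] (S : Matrix α α ℂ → Matrix β β ℂ)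
    (b b' : β) (i j : α) : choiMatrix S (b, i) (b', j) = S (single i j 1) b b' := by
  simp [choiMatrix, Matrix.sum_apply, single_apply, ite_and, Finset.sum_ite_eq']

theorem choiMatrix_injective [Fintype α] [DecidableEq α] :
    Function.Injective fun S : Matrix α α ℂ →ₗ[ℂ] Matrix β β ℂ => choiMatrix S := by
  intro S S' h
  have hbasis : ∀ i j, S (single i j 1) = S' (single i j 1) := fun i j => by
    ext b b'
    simpa only [choiMatrix_apply] using congrFun (congrFun h (b, i)) (b', j)
  exact ext_linearMap ℂ fun i j => LinearMap.ext_ring (by simpa using hbasis i j)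

theorem hsAdjoint_apply_apply [Fintype α] [DecidableEq α] [Fintype β]
    (S : Matrix α α ℂ → Matrix β β ℂ) (Y : Matrix β β ℂ) (i j : α) :
    hsAdjoint S Y i j = ((S (single i j 1))ᴴ * Y).trace := by
  simp [hsAdjoint, Matrix.sum_apply, single_apply, ite_and, Finset.sum_ite_eq']

/-- The usual Kraus form is `P = 1`; Choi's perturbation argument varies `P`. -/
def krausMap [Fintype α] [Fintype ι] (K : ι → Matrix β α ℂ) :
    Matrix ι ι ℂ →ₗ[ℂ] Matrix α α ℂ →ₗ[ℂ] Matrix β β ℂ :=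
  LinearMap.mk₂ ℂ (fun P X => ∑ a, ∑ b, P a b • (K a * X * (K b)ᴴ))
    (fun P Q X => by simp only [Matrix.add_apply, add_smul, Finset.sum_add_distrib])
    (fun c P X => by simp only [Matrix.smul_apply, smul_eq_mul, mul_smul, Finset.smul_sum])
    (fun P X Y => by simp only [Matrix.mul_add, Matrix.add_mul, smul_add, Finset.sum_add_distrib])
    (fun c P X => by simp only [Matrix.mul_smul, Matrix.smul_mul, smul_comm c, Finset.smul_sum])

theorem krausMap_apply [Fintype α] [Fintype ι] (K : ι → Matrix β α ℂ) (P : Matrix ι ι ℂ)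
    (X : Matrix α α ℂ) : krausMap K P X = ∑ a, ∑ b, P a b • (K a * X * (K b)ᴴ) := rfl

theorem krausMap_one_apply [Fintype α] [Fintype ι] [DecidableEq ι] (K : ι → Matrix β α ℂ)
    (X : Matrix α α ℂ) : krausMap K 1 X = ∑ a, K a * X * (K a)ᴴ := by
  simp [krausMap_apply, one_apply]

/-- The image of the identity under the Hilbert–Schmidt adjoint of `krausMap K P`. -/
def krausDualUnit [Fintype β] [Fintype ι] (K : ι → Matrix β α ℂ) :
    Matrix ι ι ℂ →ₗ[ℂ] Matrix α α ℂ where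
  toFun P := ∑ a, ∑ b, P a b • ((K b)ᴴ * K a)
  map_add' P Q := by simp only [Matrix.add_apply, add_smul, Finset.sum_add_distrib]
  map_smul' c P := by simp only [Matrix.smul_apply, smul_eq_mul, mul_smul, Finset.smul_sum,
    RingHom.id_apply]

theorem krausDualUnit_apply [Fintype β] [Fintype ι] (K : ι → Matrix β α ℂ) (P : Matrix ι ι ℂ) :
    krausDualUnit K P = ∑ a, ∑ b, P a b • ((K b)ᴴ * K a) := rfl

theorem krausDualUnit_one [Fintype β] [Fintype ι] [DecidableEq ι] (K : ι → Matrix β α ℂ) :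
    krausDualUnit K 1 = ∑ a, (K a)ᴴ * K a := by
  simp [krausDualUnit_apply, one_apply]

theorem krausDualUnit_conjTranspose [Fintype β] [Fintype ι] (K : ι → Matrix β α ℂ)
    (P : Matrix ι ι ℂ) : krausDualUnit K Pᴴ = (krausDualUnit K P)ᴴ := by
  simp only [krausDualUnit_apply, conjTranspose_sum, conjTranspose_smul, conjTranspose_mul,
    conjTranspose_conjTranspose, conjTranspose_apply]
  exact Finset.sum_comm

theorem trace_krausMap [Fintype α] [Fintype β] [Fintype ι] (K : ι → Matrix β α ℂ)
    (P : Matrix ι ι ℂ) (X : Matrix α α ℂ) :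
    (krausMap K P X).trace = (krausDualUnit K P * X).trace := by
  simp only [krausMap_apply, krausDualUnit_apply, Matrix.sum_mul, trace_sum, Matrix.smul_mul,
    trace_smul, trace_mul_cycle (K _)]

theorem isTPMap_krausMap_iff [Fintype α] [DecidableEq α] [Fintype β] [Fintype ι]
    (K : ι → Matrix β α ℂ) (P : Matrix ι ι ℂ) :
    IsTPMap (krausMap K P) ↔ krausDualUnit K P = 1 := by
  simp only [IsTPMap, trace_krausMap, ext_iff_trace_mul_right (B := 1), Matrix.one_mul]

def krausColumns (K : ι → Matrix β α ℂ) : Matrix (β × α) ι ℂ :=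
  of fun p a => K a p.1 p.2

theorem linearIndependent_krausColumns_col_iff [Fintype ι] (K : ι → Matrix β α ℂ) :
    LinearIndependent ℂ (krausColumns K).col ↔ LinearIndependent ℂ K :=
  LinearMap.linearIndependent_iff (LinearEquiv.curry ℂ ℂ β α).symm.toLinearMap (by simp)

theorem choiMatrix_krausMap [Fintype α] [DecidableEq α] [Fintype ι] (K : ι → Matrix β α ℂ)
    (P : Matrix ι ι ℂ) : choiMatrix (krausMap K P) = krausColumns K * P * (krausColumns K)ᴴ := by
  ext ⟨b, i⟩ ⟨b', j⟩
  simp [choiMatrix_apply, krausMap_apply, krausColumns, Matrix.sum_apply, mul_apply, single_apply,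
    Finset.sum_mul, ite_and]
  rw [Finset.sum_comm]
  exact Finset.sum_congr rfl fun _ _ => Finset.sum_congr rfl fun _ _ => by ring

theorem isCPMap_krausMap [Fintype α] [DecidableEq α] [Fintype β] [Fintype ι]
    (K : ι → Matrix β α ℂ) {P : Matrix ι ι ℂ} (hP : P.PosSemidef) : IsCPMap (krausMap K P) := by
  rw [IsCPMap, choiMatrix_krausMap]
  exact hP.mul_mul_conjTranspose_same _

theorem krausMap_injective [Fintype α] [DecidableEq α] [Fintype β] [Fintype ι]
    {K : ι → Matrix β α ℂ} (hK : LinearIndependent ℂ K) : Function.Injective (krausMap K) := by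
  intro P Q h
  have hV := mulVec_injective_iff.2 ((linearIndependent_krausColumns_col_iff K).2 hK)
  have hchoi := congrArg (fun S : Matrix α α ℂ →ₗ[ℂ] Matrix β β ℂ => choiMatrix ⇑S) h
  simp only [choiMatrix_krausMap, Matrix.mul_assoc] at hchoi
  have h1 := congrArg conjTranspose (mul_right_injective_of_mulVec_injective hV hchoi)
  simp only [conjTranspose_mul, conjTranspose_conjTranspose] at h1
  simpa using congrArg conjTranspose (mul_right_injective_of_mulVec_injective hV h1)

theorem IsCPMap.exists_linearIndependent_krausMap_eq [Fintype α] [DecidableEq α] [Fintype β]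
    [DecidableEq β] {S : Matrix α α ℂ →ₗ[ℂ] Matrix β β ℂ} (hS : IsCPMap S) :
    ∃ (n : ℕ) (K : Fin n → Matrix β α ℂ), LinearIndependent ℂ K ∧ S = krausMap K 1 := by
  obtain ⟨n, V, hV, hSV⟩ := hS.exists_linearIndependent_col_eq_mul_conjTranspose
  refine ⟨n, fun a => of fun b i => V (b, i) a, (linearIndependent_krausColumns_col_iff _).1 hV,
    choiMatrix_injective ?_⟩
  simp only [choiMatrix_krausMap, Matrix.mul_one]
  exact hSV

theorem hsAdjoint_krausMap_one [Fintype α] [DecidableEq α] [Fintype β] [Fintype ι]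
    [DecidableEq ι] (K : ι → Matrix β α ℂ) (Y : Matrix β β ℂ) :
    hsAdjoint (krausMap K 1) Y = krausMap (fun a => (K a)ᴴ) 1 Y := by
  ext i j
  simp only [hsAdjoint_apply_apply, krausMap_one_apply, conjTranspose_sum, conjTranspose_mul,
    conjTranspose_conjTranspose, conjTranspose_single, star_one, Matrix.sum_mul, trace_sum,
    Matrix.sum_apply]
  refine Finset.sum_congr rfl fun a _ => ?_
  rw [Matrix.mul_assoc, Matrix.mul_assoc, trace_mul_comm, Matrix.mul_assoc, trace_single_mul,
    one_smul, Matrix.mul_assoc]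

theorem krausMap_one_comp [Fintype α] [Fintype β] [Fintype ι] [DecidableEq ι] {γ κ : Type*}
    [Fintype κ] [DecidableEq κ] (L : κ → Matrix γ β ℂ) (K : ι → Matrix β α ℂ)
    (X : Matrix α α ℂ) :
    krausMap L 1 (krausMap K 1 X) = krausMap (fun p : ι × κ => L p.2 * K p.1) 1 X := by
  simp only [krausMap_one_apply, Matrix.mul_sum, Matrix.sum_mul, Fintype.sum_prod_type,
    conjTranspose_mul, Matrix.mul_assoc]
  exact Finset.sum_comm

theorem posDef_choiMatrix_krausMap_one [Fintype α] [DecidableEq α] [Fintype β] [DecidableEq β]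
    [Fintype ι] [DecidableEq ι] {K : ι → Matrix β α ℂ}
    (hK : Submodule.span ℂ (Set.range K) = ⊤) : (choiMatrix (krausMap K 1)).PosDef := by
  rw [choiMatrix_krausMap, Matrix.mul_one]
  refine PosDef.mul_conjTranspose_self _ ((injective_iff_map_eq_zero (vecMulLinear _)).2 ?_)
  intro x hx
  ext ⟨b, i⟩
  obtain ⟨c, hc⟩ := (Submodule.mem_span_range_iff_exists_fun ℂ).1 (hK ▸ Submodule.mem_top :
    single b i (1 : ℂ) ∈ Submodule.span ℂ (Set.range K))
  have hxK : ∀ k, ∑ p : β × α, x p * K k p.1 p.2 = 0 := fun k => congrFun hx k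
  calc x (b, i) = ∑ p : β × α, x p * single b i (1 : ℂ) p.1 p.2 := by
        simp [single_apply, Fintype.sum_prod_type, ite_and]
    _ = ∑ k, c k * ∑ p : β × α, x p * K k p.1 p.2 := by
        simp only [← hc, Matrix.sum_apply, Matrix.smul_apply, smul_eq_mul, Finset.mul_sum]
        rw [Finset.sum_comm]
        exact Finset.sum_congr rfl fun _ _ => Finset.sum_congr rfl fun _ _ => by ring
    _ = 0 := by simp [hxK]

theorem eq_zero_of_isHermitian_of_krausDualUnit_eq_zero [Fintype α] [DecidableEq α] [Fintype β]
    [Fintype ι] [DecidableEq ι] {K : ι → Matrix β α ℂ} (hK : LinearIndependent ℂ K)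
    (hext : krausMap K 1 ∈
      Set.extremePoints ℝ {S : Matrix α α ℂ →ₗ[ℂ] Matrix β β ℂ | IsQChannel ⇑S})
    {T : Matrix ι ι ℂ} (hT : T.IsHermitian) (hTK : krausDualUnit K T = 0) : T = 0 := by
  obtain ⟨ε, hε, hball⟩ := Metric.eventually_nhds_iff.1 hT.eventually_posSemidef_one_add_smul
  have hTP : krausDualUnit K 1 = 1 := (isTPMap_krausMap_iff K 1).1 hext.1.2
  have hchannel : ∀ s : ℝ, |s| < ε →
      krausMap K (1 + (s : ℂ) • T) ∈ {S : Matrix α α ℂ →ₗ[ℂ] Matrix β β ℂ | IsQChannel ⇑S} :=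
    fun s hs => ⟨isCPMap_krausMap K (hball (by simpa using hs)),
      (isTPMap_krausMap_iff K _).2 (by simp [hTP, hTK])⟩
  have hmid : krausMap K 1 ∈ openSegment ℝ (krausMap K (1 + ((ε / 2 : ℝ) : ℂ) • T))
      (krausMap K (1 + ((-(ε / 2) : ℝ) : ℂ) • T)) := by
    refine ⟨1 / 2, 1 / 2, by norm_num, by norm_num, by norm_num, ?_⟩
    simp only [map_add, map_smul, Complex.ofReal_neg]
    module
  have h := krausMap_injective hK (hext.2 (hchannel _ (by rw [abs_of_pos (by linarith)]; linarith))
    (hchannel _ (by rw [abs_neg, abs_of_pos (by linarith)]; linarith)) hmid)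
  simpa [hε.ne'] using h

theorem linearIndependent_conjTranspose_mul_of_mem_extremePoints [Fintype α] [DecidableEq α]
    [Fintype β] [Fintype ι] [DecidableEq ι] {K : ι → Matrix β α ℂ} (hK : LinearIndependent ℂ K)
    (hext : krausMap K 1 ∈
      Set.extremePoints ℝ {S : Matrix α α ℂ →ₗ[ℂ] Matrix β β ℂ | IsQChannel ⇑S}) :
    LinearIndependent ℂ fun p : ι × ι => (K p.2)ᴴ * K p.1 := by
  have hker : ∀ c, krausDualUnit K c = 0 → c = 0 := by
    intro c hc
    have hc' : krausDualUnit K (star c) = 0 := by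
      rw [star_eq_conjTranspose, krausDualUnit_conjTranspose, hc, conjTranspose_zero]
    have hre := eq_zero_of_isHermitian_of_krausDualUnit_eq_zero hK hext (realPart c).2
      (by simp [realPart_apply_coe, LinearMap.map_smul_of_tower, hc, hc'])
    have him := eq_zero_of_isHermitian_of_krausDualUnit_eq_zero hK hext (imaginaryPart c).2
      (by simp [imaginaryPart_apply_coe, LinearMap.map_smul_of_tower, hc, hc'])
    rw [← realPart_add_I_smul_imaginaryPart c, hre, him, smul_zero, add_zero]
  rw [Fintype.linearIndependent_iff]
  intro g hg p
  have hc := hker (of fun a b => g (a, b)) (by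
    rw [krausDualUnit_apply, ← hg, Fintype.sum_prod_type]
    rfl)
  exact congrFun (congrFun hc p.1) p.2

theorem krausMap_one_apply_one_of_card_le_one [Fintype α] [DecidableEq α] [Fintype ι] [DecidableEq ι]
    {K : ι → Matrix α α ℂ} (hι : Fintype.card ι ≤ 1) (hK : krausDualUnit K 1 = 1) :
    krausMap K 1 1 = 1 := by
  rw [krausDualUnit_one] at hK
  rw [krausMap_one_apply]
  rcases isEmpty_or_nonempty ι with hι' | ⟨⟨a⟩⟩
  · simpa using hK
  · have : Subsingleton ι := Fintype.card_le_one_iff_subsingleton.1 hι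
    rw [Fintype.sum_subsingleton _ a] at hK ⊢
    rw [Matrix.mul_one]
    exact mul_eq_one_comm.1 hK

theorem span_conjTranspose_mul_eq_top_of_card_le [Fintype α] [Fintype ι] {K : ι → Matrix α α ℂ}
    (hK : LinearIndependent ℂ fun p : ι × ι => (K p.2)ᴴ * K p.1)
    (hcard : Fintype.card α ≤ Fintype.card ι) :
    Submodule.span ℂ (Set.range fun p : ι × ι => (K p.2)ᴴ * K p.1) = ⊤ := by
  refine hK.span_eq_top_of_card_eq_finrank' (le_antisymm hK.fintype_card_le_finrank ?_)
  simpa [Module.finrank_matrix] using Nat.mul_le_mul hcard hcard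

end Kraus

/-- a non-unital extreme point of the convex set of qubit channels has
`C_{M†∘M}` positive definite. -/
theorem stmt7 (M : Mat 2 →ₗ[ℂ] Mat 2)
    (hExt : M ∈ Set.extremePoints ℝ {S : Mat 2 →ₗ[ℂ] Mat 2 | IsQChannel ⇑S})
    (hNonUnital : M 1 ≠ 1) :
    (choiMatrix (fun X => hsAdjoint ⇑M (M X))).PosDef := by
  obtain ⟨n, K, hK, rfl⟩ := hExt.1.1.exists_linearIndependent_krausMap_eq
  have hTP : krausDualUnit K 1 = 1 := (isTPMap_krausMap_iff K 1).1 hExt.1.2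
  have hcard : Fintype.card (Fin 2) ≤ Fintype.card (Fin n) := by
    by_contra! h
    exact hNonUnital (krausMap_one_apply_one_of_card_le_one (by simp at h ⊢; omega) hTP)
  have hMM : (fun X => hsAdjoint (krausMap K 1) (krausMap K 1 X)) =
      krausMap (fun p : Fin n × Fin n => (K p.2)ᴴ * K p.1) 1 := by
    ext1 X
    rw [hsAdjoint_krausMap_one, krausMap_one_comp]
  rw [hMM]
  exact posDef_choiMatrix_krausMap_one (span_conjTranspose_mul_eq_top_of_card_le
    (linearIndependent_conjTranspose_mul_of_mem_extremePoints hK hExt) hcard)
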